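/- Let A ∈ M_n(ℂ) and let Ω be a region (nonempty open connected subset) of ℂ \ σ(A), where σ(A) is the spectrum of A. Then the smallest singular value of the resolvent s_n(R_A(z)), where R_A(z) = (A − zI)⁻¹, does not attain a minimum on Ω: there is no point z₀ ∈ Ω with s_n(R_A(z₀)) ≤ s_n(R_A(z)) for all z ∈ Ω. Equivalently, s_n(R_A(z)) > inf_{ζ∈Ω} s_n(R_A(ζ)) for every z ∈ Ω. -/

import Mathlib

/-! Since `sₙ((A - z)⁻¹) = 1 / ‖A - z‖`, a minimum of `sₙ(R_A)` at `z₀` is a maximum of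
`‖A - z‖` at `z₀`. For a vector `y` with `‖(A - z₀) y‖ = ‖A - z₀‖ ‖y‖`, the norm of the
nonconstant affine, hence holomorphic, map `z ↦ (A - z) y` then has a local maximum at `z₀`,
which the maximum modulus principle in the strictly convex space `ℂⁿ` forbids. -/

open scoped Matrix

/-- The Euclidean norm of a vector in `ℂⁿ`. -/
noncomputable def euclNorm {n : ℕ} (x : Fin n → ℂ) : ℝ :=
  Real.sqrt (∑ i, ‖x i‖ ^ 2)

/-- The operator norm of a complex `n × n` matrix induced by the Euclidean norm on `ℂⁿ`. -/
noncomputable def opNorm {n : ℕ} (A : Matrix (Fin n) (Fin n) ℂ) : ℝ :=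
  ‖(Matrix.toEuclideanCLM (𝕜 := ℂ) A : EuclideanSpace ℂ (Fin n) →L[ℂ] EuclideanSpace ℂ (Fin n))‖

/-- `sval A k` is the `(k+1)`-st singular value `s_{k+1}(A)` of `A`: the nonnegative square
roots of the eigenvalues of `Aᴴ * A`, listed in nonincreasing order.  In particular
`sval A 0 = s₁(A)` is the largest singular value (the operator norm) and
`sval A (n-1) = sₙ(A)` is the smallest. -/
noncomputable def sval {n : ℕ} (A : Matrix (Fin n) (Fin n) ℂ) (k : Fin n) : ℝ :=
  let f : Fin n → ℝ := fun i =>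
    Real.sqrt ((Matrix.isHermitian_conjTranspose_mul_self A).eigenvalues i)
  (f ∘ Tuple.sort f) k.rev

/-- The Frobenius (Hilbert--Schmidt) norm of a complex matrix: `‖T‖_F = (trace (Tᴴ T))^{1/2}`. -/
noncomputable def frobNorm {n : ℕ} (A : Matrix (Fin n) (Fin n) ℂ) : ℝ :=
  Real.sqrt ((Matrix.trace (Aᴴ * A)).re)

open scoped InnerProductSpace ComplexOrder Topology

namespace Matrix

lemma norm_toEuclideanLin_sq {𝕜 ι ι' : Type*} [RCLike 𝕜] [Fintype ι] [DecidableEq ι]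
    [Fintype ι'] (B : Matrix ι' ι 𝕜) (x : EuclideanSpace 𝕜 ι) :
    ‖toEuclideanLin B x‖ ^ 2 = RCLike.re ⟪x, toEuclideanLin (Bᴴ * B) x⟫_𝕜 := by
  classical
  rw [toLpLin_mul_same, LinearMap.comp_apply, toEuclideanLin_conjTranspose_eq_adjoint,
    LinearMap.adjoint_inner_right, inner_self_eq_norm_sq]

variable {𝕜 ι : Type*} [RCLike 𝕜] [Fintype ι] [DecidableEq ι]

lemma IsHermitian.toEuclideanLin_eigenvectorBasis {H : Matrix ι ι 𝕜} (hH : H.IsHermitian)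
    (i : ι) :
    toEuclideanLin H (hH.eigenvectorBasis i) = (hH.eigenvalues i : 𝕜) • hH.eigenvectorBasis i := by
  rw [toLpLin_apply, hH.mulVec_eigenvectorBasis, RCLike.real_smul_eq_coe_smul (K := 𝕜)]
  rfl

lemma IsHermitian.re_inner_toEuclideanLin_self {H : Matrix ι ι 𝕜} (hH : H.IsHermitian)
    (x : EuclideanSpace 𝕜 ι) :
    RCLike.re ⟪x, toEuclideanLin H x⟫_𝕜 =
      ∑ i, hH.eigenvalues i * ‖⟪hH.eigenvectorBasis i, x⟫_𝕜‖ ^ 2 := by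
  have hsymm : (toEuclideanLin H).IsSymmetric := isSymmetric_toEuclideanLin_iff.mpr hH
  rw [← hH.eigenvectorBasis.sum_inner_mul_inner, map_sum]
  refine Finset.sum_congr rfl fun i _ => ?_
  rw [← hsymm, hH.toEuclideanLin_eigenvectorBasis, inner_smul_left, RCLike.conj_ofReal,
    ← inner_conj_symm, mul_left_comm, RCLike.conj_mul, ← RCLike.ofReal_pow, ← RCLike.ofReal_mul,
    RCLike.ofReal_re]

lemma IsHermitian.mul_norm_sq_le_re_inner_toEuclideanLin_self {H : Matrix ι ι 𝕜}
    (hH : H.IsHermitian) {c : ℝ} (hc : ∀ i, c ≤ hH.eigenvalues i) (x : EuclideanSpace 𝕜 ι) :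
    c * ‖x‖ ^ 2 ≤ RCLike.re ⟪x, toEuclideanLin H x⟫_𝕜 := by
  rw [hH.re_inner_toEuclideanLin_self, ← hH.eigenvectorBasis.sum_sq_norm_inner_right,
    Finset.mul_sum]
  gcongr with i
  exact hc i

end Matrix

open Matrix

section SmallestSingularValue

lemma sval_nonneg {n : ℕ} (B : Matrix (Fin n) (Fin n) ℂ) (k : Fin n) : 0 ≤ sval B k :=
  Real.sqrt_nonneg _

variable {n : ℕ} (B : Matrix (Fin (n + 1)) (Fin (n + 1)) ℂ)

lemma exists_sval_last_eq_sqrt_eigenvalues :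
    ∃ i, sval B (Fin.last n) = √((isHermitian_conjTranspose_mul_self B).eigenvalues i) :=
  ⟨_, by simp only [sval, Fin.rev_last, Function.comp_apply]; rfl⟩

lemma sval_last_le_sqrt_eigenvalues (i : Fin (n + 1)) :
    sval B (Fin.last n) ≤ √((isHermitian_conjTranspose_mul_self B).eigenvalues i) := by
  set f : Fin (n + 1) → ℝ := fun i => √((isHermitian_conjTranspose_mul_self B).eigenvalues i)
  simpa [sval, Fin.rev_last] using Tuple.monotone_sort f (Fin.zero_le ((Tuple.sort f).symm i))

lemma sval_last_sq_le_eigenvalues (i : Fin (n + 1)) :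
    sval B (Fin.last n) ^ 2 ≤ (isHermitian_conjTranspose_mul_self B).eigenvalues i := by
  calc sval B (Fin.last n) ^ 2 ≤ √((isHermitian_conjTranspose_mul_self B).eigenvalues i) ^ 2 :=
        pow_le_pow_left₀ (sval_nonneg B _) (sval_last_le_sqrt_eigenvalues B i) 2
    _ = _ := Real.sq_sqrt ((posSemidef_conjTranspose_mul_self B).eigenvalues_nonneg i)

lemma sval_last_mul_norm_le (x : EuclideanSpace ℂ (Fin (n + 1))) :
    sval B (Fin.last n) * ‖x‖ ≤ ‖toEuclideanLin B x‖ := by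
  refine (pow_le_pow_iff_left₀ (mul_nonneg (sval_nonneg B _) (norm_nonneg x)) (norm_nonneg _)
    two_ne_zero).1 ?_
  rw [mul_pow, norm_toEuclideanLin_sq]
  exact (isHermitian_conjTranspose_mul_self B).mul_norm_sq_le_re_inner_toEuclideanLin_self
    (sval_last_sq_le_eigenvalues B) x

lemma exists_norm_eq_one_and_norm_toEuclideanLin_eq_sval_last :
    ∃ v : EuclideanSpace ℂ (Fin (n + 1)),
      ‖v‖ = 1 ∧ ‖toEuclideanLin B v‖ = sval B (Fin.last n) := by
  set hH := isHermitian_conjTranspose_mul_self B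
  obtain ⟨j, hj⟩ := exists_sval_last_eq_sqrt_eigenvalues B
  refine ⟨hH.eigenvectorBasis j, hH.eigenvectorBasis.orthonormal.1 j, ?_⟩
  rw [hj, ← Real.sqrt_sq (norm_nonneg _), norm_toEuclideanLin_sq,
    hH.toEuclideanLin_eigenvectorBasis, inner_smul_right, inner_self_eq_norm_sq_to_K,
    hH.eigenvectorBasis.orthonormal.1 j]
  simp

variable {B}

lemma sval_last_inv_mul_norm_le (hB : IsUnit B) (y : EuclideanSpace ℂ (Fin (n + 1))) :
    sval B⁻¹ (Fin.last n) * ‖toEuclideanLin B y‖ ≤ ‖y‖ := by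
  have hinv : toEuclideanLin B⁻¹ (toEuclideanLin B y) = y := by
    rw [← LinearMap.comp_apply, ← toLpLin_mul_same,
      nonsing_inv_mul B ((isUnit_iff_isUnit_det B).1 hB), toLpLin_one, LinearMap.id_apply]
  simpa only [hinv] using sval_last_mul_norm_le B⁻¹ (toEuclideanLin B y)

lemma exists_norm_toEuclideanLin_eq_one_and_norm_eq_sval_last_inv (hB : IsUnit B) :
    ∃ y : EuclideanSpace ℂ (Fin (n + 1)),
      ‖toEuclideanLin B y‖ = 1 ∧ ‖y‖ = sval B⁻¹ (Fin.last n) := by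
  obtain ⟨v, hv, hBv⟩ := exists_norm_eq_one_and_norm_toEuclideanLin_eq_sval_last B⁻¹
  refine ⟨toEuclideanLin B⁻¹ v, ?_, hBv⟩
  rw [← LinearMap.comp_apply, ← toLpLin_mul_same,
    mul_nonsing_inv B ((isUnit_iff_isUnit_det B).1 hB), toLpLin_one, LinearMap.id_apply, hv]

end SmallestSingularValue

lemma not_isLocalMax_norm_sub_smul {E : Type*} [NormedAddCommGroup E] [NormedSpace ℂ E]
    [StrictConvexSpace ℝ E] (a : E) {y : E} (hy : y ≠ 0) (z₀ : ℂ) :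
    ¬ IsLocalMax (fun z : ℂ => ‖a - z • y‖) z₀ := by
  intro hmax
  have hconst : ∀ᶠ z in 𝓝 z₀, a - z • y = a - z₀ • y :=
    Complex.eventually_eq_of_isLocalMax_norm
      (Filter.Eventually.of_forall fun _ => by fun_prop) hmax
  have hz : ∀ᶠ z in 𝓝 z₀, z = z₀ :=
    hconst.mono fun z hz => smul_left_injective ℂ hy (sub_right_injective hz)
  have hpunctured : ∀ᶠ z in 𝓝[≠] z₀, False :=
    ((hz.filter_mono nhdsWithin_le_nhds).and self_mem_nhdsWithin).mono fun _ h => h.2 h.1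
  exact hpunctured.exists.elim fun _ => id

attribute [local instance] Matrix.normedAddCommGroup Matrix.normedSpace

theorem resolvent_smallest_singular_value_no_minimum_general {n : ℕ}
    (A : Matrix (Fin (n + 1)) (Fin (n + 1)) ℂ) (Ω : Set ℂ) (hΩσ : Ω ⊆ (spectrum ℂ A)ᶜ)
    (hΩ : IsOpen Ω) :
    ¬ ∃ z₀ ∈ Ω, ∀ z ∈ Ω,
        sval ((A - z₀ • (1 : Matrix (Fin (n + 1)) (Fin (n + 1)) ℂ))⁻¹) (Fin.last n) ≤
          sval ((A - z • (1 : Matrix (Fin (n + 1)) (Fin (n + 1)) ℂ))⁻¹) (Fin.last n) := by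
  rintro ⟨z₀, hz₀, hmin⟩
  have hunit : ∀ z ∈ Ω, IsUnit (A - z • 1) := fun z hz => by
    simpa [Algebra.algebraMap_eq_smul_one] using (spectrum.notMem_iff.1 (hΩσ hz)).neg
  have happly : ∀ (z : ℂ) y, toEuclideanLin (A - z • 1) y = toEuclideanLin A y - z • y :=
    fun z y => by simp only [map_sub, map_smul, toLpLin_one, LinearMap.sub_apply,
      LinearMap.smul_apply, LinearMap.id_apply]
  obtain ⟨y, hy, hs₀⟩ :=
    exists_norm_toEuclideanLin_eq_one_and_norm_eq_sval_last_inv (hunit z₀ hz₀)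
  have hy0 : y ≠ 0 := by rintro rfl; simp at hy
  refine not_isLocalMax_norm_sub_smul (toEuclideanLin A y) hy0 z₀ ?_
  filter_upwards [hΩ.mem_nhds hz₀] with z hz
  rw [← happly, ← happly, hy]
  have hbound := (mul_le_mul_of_nonneg_right (hmin z hz) (norm_nonneg _)).trans
    (sval_last_inv_mul_norm_le (hunit z hz) y)
  rw [← hs₀] at hbound
  exact le_of_mul_le_mul_left (by rwa [mul_one]) (norm_pos_iff.2 hy0)

/-- The smallest singular value of the resolvent `R_A(z) = (A − z I)⁻¹` does not attain a
minimum on any region `Ω ⊆ ℂ \ σ(A)`: there is no `z₀ ∈ Ω` with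
`sₙ(R_A z₀) ≤ sₙ(R_A z)` for all `z ∈ Ω`.  (Matrices here have size `n + 1`, so the smallest
singular value is the one with index `Fin.last n`.) -/
theorem resolvent_smallest_singular_value_no_minimum {n : ℕ}
    (A : Matrix (Fin (n + 1)) (Fin (n + 1)) ℂ) (Ω : Set ℂ) (hΩσ : Ω ⊆ (spectrum ℂ A)ᶜ)
    (hΩ : IsOpen Ω) (hconn : IsConnected Ω) :
    ¬ ∃ z₀ ∈ Ω, ∀ z ∈ Ω,
        sval ((A - z₀ • (1 : Matrix (Fin (n + 1)) (Fin (n + 1)) ℂ))⁻¹) (Fin.last n) ≤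
          sval ((A - z • (1 : Matrix (Fin (n + 1)) (Fin (n + 1)) ℂ))⁻¹) (Fin.last n) :=
  resolvent_smallest_singular_value_no_minimum_general A Ω hΩσ hΩ
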